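/- arXiv:1309.4662 — 4 statements merged into one kernel-verified Lean document; each statement's English description precedes it below -/
import Mathlib

section
/- Let G be a finite simple graph with at least 3 edges and let C be an Eulerian circuit of G. Then the sequence of edges traversed by C, taken in order, is the vertex sequence of a Hamiltonian cycle of the line graph L(G). -/
/-!
Consecutive edges of a trail are distinct and share a vertex, so the edge sequence of a trail is a
walk in the line graph, and for a circuit the last edge meets the first one at the base vertex,
which closes this walk up. Since the edges of a circuit are distinct and there are at least three
of them, the closed walk is a cycle; since an Eulerian circuit passes through every edge, the
cycle is Hamiltonian.
-/

theorem List.IsChain.and {α : Type*} {R S : α → α → Prop} :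
    ∀ {l : List α}, l.IsChain R → l.IsChain S → l.IsChain (fun a b => R a b ∧ S a b)
  | [], _, _ => .nil
  | [_], _, _ => .singleton _
  | _ :: _ :: _, hR, hS => .cons_cons ⟨hR.rel, hS.rel⟩ (hR.of_cons.and hS.of_cons)

theorem List.isChain_ne_cons_append_singleton {α : Type*} {a : α} {l : List α}
    (hnd : (a :: l).Nodup) (hl : l ≠ []) : (a :: (l ++ [a])).IsChain (· ≠ ·) := by
  obtain ⟨b, l, rfl⟩ := List.exists_cons_of_ne_nil hl
  have hrot : (b :: l ++ [a]).Nodup := (List.perm_append_singleton a _).nodup_iff.mpr hnd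
  rw [List.cons_append, List.isChain_cons_cons, ← List.cons_append]
  exact ⟨by grind, hrot.isChain⟩

namespace SimpleGraph

variable {V : Type*} {G : SimpleGraph V}

def Dart.lineGraphVert (d : G.Dart) : G.edgeSet := ⟨d.edge, d.edge_mem⟩

theorem Dart.lineGraph_adj_of_dartAdj {d d' : G.Dart} (h : G.DartAdj d d')
    (hne : d.edge ≠ d'.edge) : G.lineGraph.Adj d.lineGraphVert d'.lineGraphVert := by
  refine lineGraph_adj_iff_exists.mpr ⟨fun h' => hne (congrArg Subtype.val h'), d.snd, ?_, ?_⟩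
  · exact Sym2.mem_mk_right _ _
  · rw [h]; exact Sym2.mem_mk_left _ _

namespace Walk

theorem exists_lineGraph_walk_map_support_eq_edges {u v : V} (p : G.Walk u v) (hp : ¬p.Nil)
    (hne : p.edges.IsChain (· ≠ ·)) :
    ∃ (e f : G.edgeSet) (H : G.lineGraph.Walk e f), H.support.map Subtype.val = p.edges := by
  have hL : p.darts.map Dart.lineGraphVert ≠ [] := by simpa [darts_eq_nil] using hp
  have hchain : (p.darts.map Dart.lineGraphVert).IsChain G.lineGraph.Adj :=
    List.isChain_map_of_isChain _ (fun _ _ h => Dart.lineGraph_adj_of_dartAdj h.1 h.2)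
      (p.isChain_dartAdj_darts.and ((List.isChain_map _).mp hne))
  exact ⟨_, _, ofSupport _ hL hchain, by simp [Dart.lineGraphVert, edges]⟩

theorem IsCircuit.exists_lineGraph_walk {u : V} {C : G.Walk u u} (hC : C.IsCircuit) :
    ∃ (e₀ : G.edgeSet) (H : G.lineGraph.Walk e₀ e₀),
      H.support.map Subtype.val = C.edges ++ [(e₀ : Sym2 V)] := by
  cases C with
  | nil => exact absurd rfl hC.ne_nil
  | @cons _ v _ h p =>
    -- traversing the first edge once more appends it to the edge sequence
    have hchain : ((cons h p).concat h).edges.IsChain (· ≠ ·) := by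
      rw [edges_concat, edges_cons, List.concat_eq_append, List.cons_append]
      refine List.isChain_ne_cons_append_singleton (by simpa using hC.edges_nodup) ?_
      have h3 := hC.three_le_length
      rw [length_cons] at h3
      exact List.ne_nil_of_length_pos (by rw [length_edges]; omega)
    obtain ⟨e, f, H, hH⟩ := exists_lineGraph_walk_map_support_eq_edges _ (by simp) hchain
    rw [edges_concat, edges_cons, List.concat_eq_append] at hH
    have he : (e : Sym2 V) = s(u, v) := by
      have h := congrArg List.head? hH
      rwa [← H.cons_tail_support, List.map_cons, List.head?_cons, List.cons_append,
        List.head?_cons, Option.some_inj] at h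
    have hf : (f : Sym2 V) = s(u, v) := by
      have h := congrArg List.getLast? hH
      rwa [List.getLast?_map, List.getLast?_eq_some_getLast H.support_ne_nil, getLast_support,
        List.getLast?_concat, Option.map_some, Option.some_inj] at h
    obtain rfl : e = f := Subtype.ext (he.trans hf.symm)
    exact ⟨e, H, by rw [hH, edges_cons, he]⟩

theorem map_val_support_tail_perm_edges {u : V} {C : G.Walk u u} {e₀ : G.edgeSet}
    {H : G.lineGraph.Walk e₀ e₀} (hH : H.support.map Subtype.val = C.edges ++ [(e₀ : Sym2 V)]) :
    (H.support.tail.map Subtype.val).Perm C.edges := by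
  rw [← H.cons_tail_support, List.map_cons] at hH
  exact (List.perm_cons _).mp (by rw [hH]; exact List.perm_append_singleton _ _)

theorem IsCircuit.isCycle_of_map_support_eq {u : V} {C : G.Walk u u} (hC : C.IsCircuit)
    {e₀ : G.edgeSet} {H : G.lineGraph.Walk e₀ e₀}
    (hH : H.support.map Subtype.val = C.edges ++ [(e₀ : Sym2 V)]) : H.IsCycle := by
  have h3 := hC.three_le_length
  have hlen : H.length = C.length := by simpa using congrArg List.length hH
  have hnil : ¬H.Nil := by rw [← length_eq_zero_iff]; omega
  rw [isCycle_iff_isPath_tail_and_le_length, isPath_def, support_tail_of_not_nil _ hnil, hlen]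
  exact ⟨((map_val_support_tail_perm_edges hH).nodup_iff.mpr hC.edges_nodup).of_map _, h3⟩

theorem IsEulerian.isHamiltonianCycle_of_map_support_eq [DecidableEq V] [DecidableEq G.edgeSet]
    {u : V} {C : G.Walk u u} (hC : C.IsEulerian) (hCirc : C.IsCircuit) {e₀ : G.edgeSet}
    {H : G.lineGraph.Walk e₀ e₀} (hH : H.support.map Subtype.val = C.edges ++ [(e₀ : Sym2 V)]) :
    H.IsHamiltonianCycle := by
  have hcyc := hCirc.isCycle_of_map_support_eq hH
  refine isHamiltonianCycle_isCycle_and_isHamiltonian_tail.mpr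
    ⟨hcyc, hcyc.isPath_tail.isHamiltonian_of_mem fun e => ?_⟩
  rw [support_tail_of_not_nil _ hcyc.not_nil]
  obtain ⟨e', he', hee'⟩ := List.mem_map.mp
    ((map_val_support_tail_perm_edges hH).mem_iff.mpr (hC.mem_edges_iff.mpr e.2))
  rwa [← Subtype.ext hee']

theorem IsEulerian.isCircuit [DecidableEq V] {u : V} {C : G.Walk u u} (hC : C.IsEulerian)
    (hG : G.edgeSet.Nonempty) : C.IsCircuit := by
  refine ⟨hC.isTrail, ?_⟩
  rintro rfl
  obtain ⟨e, he⟩ := hG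
  simpa using hC.mem_edges_iff.mpr he

end Walk

end SimpleGraph

open Classical in
theorem eulerian_gives_hamiltonian_lineGraph_general {V : Type*} (G : SimpleGraph V)
    (hE : 3 ≤ Nat.card G.edgeSet) {u : V} (C : G.Walk u u) (hC : C.IsEulerian) :
    ∃ (e₀ : G.edgeSet) (H : (SimpleGraph.lineGraph G).Walk e₀ e₀),
      H.IsHamiltonianCycle ∧ H.support.map Subtype.val = C.edges ++ [(e₀ : Sym2 V)] := by
  have hG : G.edgeSet.Nonempty := Set.nonempty_coe_sort.mp (Nat.card_pos_iff.mp (by omega)).1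
  have hCirc : C.IsCircuit := hC.isCircuit hG
  obtain ⟨e₀, H, hH⟩ := hCirc.exists_lineGraph_walk
  exact ⟨e₀, H, hC.isHamiltonianCycle_of_map_support_eq hCirc hH, hH⟩

open Classical in
/-- If `G` is a finite simple graph with at least `3` edges and `C` is an Eulerian
circuit of `G`, then the edges of `C`, taken in order (returning to the first edge),
form the vertex sequence of a Hamiltonian cycle of the line graph of `G`. -/
theorem eulerian_gives_hamiltonian_lineGraph {V : Type*} [Fintype V] (G : SimpleGraph V)
    (hE : 3 ≤ Nat.card G.edgeSet) {u : V} (C : G.Walk u u) (hC : C.IsEulerian) :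
    ∃ (e₀ : G.edgeSet) (H : (SimpleGraph.lineGraph G).Walk e₀ e₀),
      H.IsHamiltonianCycle ∧ H.support.map Subtype.val = C.edges ++ [(e₀ : Sym2 V)] :=
  eulerian_gives_hamiltonian_lineGraph_general G hE C hC
end

section
/- Let G be a finite connected simple graph with at least 3 edges, let D be a set of vertices of G such that every vertex in D has degree 2, every edge of G has at least one endpoint in D, and every vertex in D has exactly one neighbor in D, and let w assign a rational number to every unordered pair of distinct adjacent edges of G (turning costs). Give the line graph L(G) edge weights by assigning weight w({e,f}) to the edge of L(G) joining adjacent edges e and f of G. Then for every rational number q, G has an Eulerian circuit of turning cost at most q if and only if L(G) has a Hamiltonian cycle of total weight at most q. -/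
/-!
Read cyclically, the edges of an Eulerian circuit form a Hamiltonian cycle of `L(G)` of the same
weight: each edge occurs once, consecutive edges share a vertex, and with at least three edges
consecutive edges are distinct, so the sequence closes up into a cycle.

Conversely, a Hamiltonian cycle `E₀ E₁ …` of `L(G)` is the edge sequence of a closed walk of `G`
whenever no three consecutive edges `E, F, F'` share a vertex: then the vertex shared by `E` and `F`
and the one shared by `F` and `F'` are the two distinct ends of `F`. This is where `D` is used. If
`E, F, F'` met at `u`, then `u` has degree at least `3`, so `u ∉ D` and `F = ub` with `b ∈ D`. Let
`x` be a neighbour of `b` in `D`. In `L(G)` the edge `bx` has only two neighbours, `F` and the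
other edge at `x`, so the cycle passes through `F` and `bx` consecutively. But the two cycle
neighbours of `F` are `E` and `F'`, which contain `u`, and `bx` does not.
-/

open SimpleGraph

namespace List

variable {α β : Type*} {R : α → α → Prop} {l : List α}

theorem tail_append_take_one (l : List α) : (l ++ l.take 1).tail = l.rotate 1 := by
  cases l <;> simp

theorem dropLast_append_take_one (l : List α) : (l ++ l.take 1).dropLast = l := by
  cases l with
  | nil => rfl
  | cons a l => rw [take_succ_cons, take_zero, dropLast_concat]

theorem isChain_append_take_one_iff_forall₂ :
    IsChain R (l ++ l.take 1) ↔ Forall₂ R l (l.rotate 1) := by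
  cases l with
  | nil => simp
  | cons a l => simpa using isChain_cons_append_singleton_iff_forall₂ (R := R) (a := a) (l := l)

theorem Nodup.forall₂_ne_rotate_one (hl : l.Nodup) (h2 : 2 ≤ l.length) :
    Forall₂ (· ≠ ·) l (l.rotate 1) := by
  obtain ⟨a, b, l, rfl⟩ : ∃ a b l', l = a :: b :: l' := by
    match l, h2 with
    | a :: b :: l', _ => exact ⟨a, b, l', rfl⟩
  rw [← isChain_append_take_one_iff_forall₂]
  refine hl.isChain.append (isChain_singleton a) ?_
  intro x hx y hy
  obtain rfl : a = y := by simpa using hy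
  rintro rfl
  rw [getLast?_cons_cons] at hx
  exact (nodup_cons.1 hl).1 (mem_of_getLast? hx)

theorem zipWith_eq_map_of_forall₂ {γ : Type*} {f : α → β → γ} {g : α → γ} {l' : List β}
    (h : Forall₂ (fun a b => f a b = g a) l l') : zipWith f l l' = l.map g := by
  induction h <;> simp [*]

theorem IsRotated.sum_zipWith_rotate_one [AddCommMonoid β] (f : α → α → β) {l l' : List α}
    (h : l ~r l') : (zipWith f l (l.rotate 1)).sum = (zipWith f l' (l'.rotate 1)).sum := by
  obtain ⟨n, rfl⟩ := h
  rw [rotate_rotate, add_comm, ← rotate_rotate,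
    ← zipWith_rotate_distrib _ _ _ _ (length_rotate _ _).symm, (rotate_perm _ _).sum_eq]

end List

theorem Set.eq_or_eq_of_ncard_eq_two {α : Type*} {s : Set α} {a b c : α} (hs : s.ncard = 2)
    (ha : a ∈ s) (hb : b ∈ s) (hab : a ≠ b) (hc : c ∈ s) : c = a ∨ c = b := by
  obtain ⟨x, y, -, rfl⟩ := Set.ncard_eq_two.1 hs
  simp only [Set.mem_insert_iff, Set.mem_singleton_iff] at ha hb hc
  grind

namespace SimpleGraph

variable {V : Type*} {G : SimpleGraph V} {u : V}

namespace Walk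

theorem support_tail_eq_dropLast_rotate_one (p : G.Walk u u) :
    p.support.tail = p.support.dropLast.rotate 1 := by
  obtain ⟨t, ht⟩ : ∃ t, p.support = u :: t := ⟨_, p.cons_tail_support.symm⟩
  rcases List.eq_nil_or_concat t with rfl | ⟨t, a, rfl⟩
  · simp [ht]
  · have : a = u := by simpa [ht] using p.getLast_support
    rw [ht, this, List.tail_cons, List.concat_eq_append, ← List.cons_append,
      List.dropLast_concat, List.rotate_cons_succ, List.rotate_zero]

theorem forall₂_dartAdj_rotate_one (p : G.Walk u u) :
    List.Forall₂ G.DartAdj p.darts (p.darts.rotate 1) := by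
  have h : p.darts.map (·.snd) = (p.darts.rotate 1).map (·.fst) := by
    rw [map_snd_darts, List.map_rotate, map_fst_darts, support_tail_eq_dropLast_rotate_one]
  rwa [← List.forall₂_eq_eq_eq, List.forall₂_map_left_iff, List.forall₂_map_right_iff] at h

theorem IsCycle.forall₂_darts_rotate_one {p : G.Walk u u} (hp : p.IsCycle) :
    List.Forall₂ (fun d d' => d.snd = d'.fst ∧ d.fst ≠ d'.snd) p.darts (p.darts.rotate 1) := by
  have hne : List.Forall₂ (fun d d' : G.Dart => d.edge ≠ d'.edge) p.darts (p.darts.rotate 1) := by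
    have := hp.edges_nodup.forall₂_ne_rotate_one
      (by simpa using hp.three_le_length.trans' (by omega))
    rwa [edges, ← List.map_rotate, List.forall₂_map_left_iff, List.forall₂_map_right_iff] at this
  refine List.Forall₂.mp (fun d d' hadj hedge => ⟨hadj, fun h => hedge ?_⟩)
    p.forall₂_dartAdj_rotate_one hne
  have : d = d'.symm := by
    ext
    · exact h
    · exact hadj
  exact (dart_edge_eq_iff d d').2 (Or.inr this)

theorem sum_map_edges_eq_sum_zipWith {β : Type*} [AddCommMonoid β] (p : G.Walk u u)
    (g : Sym2 V → β) :
    (p.edges.map g).sum =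
      (List.zipWith (fun a b => g s(a, b)) p.support.dropLast
        (p.support.dropLast.rotate 1)).sum := by
  rw [← support_tail_eq_dropLast_rotate_one, ← map_fst_darts, ← map_snd_darts, List.zipWith_map,
    List.zipWith_self, edges, List.map_map]
  rfl

theorem exists_support_eq_append_take_one {l : List V} (hl : l ≠ [])
    (h : List.Forall₂ G.Adj l (l.rotate 1)) :
    ∃ (u : V) (p : G.Walk u u), p.support = l ++ l.take 1 ∧
      p.edges = List.zipWith (s(·, ·)) l (l.rotate 1) := by
  have hne : l ++ l.take 1 ≠ [] := by simp [hl]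
  have hend : (l ++ l.take 1).head hne = (l ++ l.take 1).getLast hne := by
    obtain ⟨a, t, rfl⟩ := List.exists_cons_of_ne_nil hl
    simp
  let p := ofSupport _ hne (List.isChain_append_take_one_iff_forall₂.2 h)
  refine ⟨_, p.copy rfl hend.symm, by simp [p], ?_⟩
  rw [edges_copy, edges_eq_zipWith_support, support_ofSupport, List.tail_append_take_one,
    ← List.append_nil (l.rotate 1), List.zipWith_append (List.length_rotate _ _).symm]
  simp

theorem isHamiltonianCycle_of_support_eq [DecidableEq V] {p : G.Walk u u} {l : List V}
    (hp : p.support = l ++ l.take 1) (hl : l.Nodup) (h3 : 3 ≤ l.length) (hall : ∀ x, x ∈ l) :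
    p.IsHamiltonianCycle := by
  have htail : p.support.tail = l.rotate 1 := by rw [hp, List.tail_append_take_one]
  have hnd : (l.rotate 1).Nodup := List.nodup_rotate.2 hl
  have hlen : p.length = l.length := by
    have := p.length_support
    rw [hp] at this
    simp only [List.length_append, List.length_take] at this
    omega
  have hnil : ¬p.Nil := by rw [← length_eq_zero_iff]; omega
  rw [isHamiltonianCycle_iff_isCycle_and_support_count_tail_eq_one,
    isCycle_iff_isPath_tail_and_le_length, htail]
  refine ⟨⟨IsPath.mk' ?_, hlen ▸ h3⟩,
    fun x => List.count_eq_one_of_mem hnd (List.mem_rotate.2 (hall x))⟩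
  rwa [support_tail_of_not_nil p hnil, htail]

theorem IsEulerian.card_edgeSet_eq_length [DecidableEq V] {C : G.Walk u u} (hC : C.IsEulerian) :
    Nat.card G.edgeSet = C.length := by
  rw [Nat.card_coe_set_eq, ← hC.edgeSet_eq, edgeSet, ← List.coe_toFinset, Set.ncard_coe_finset,
    List.toFinset_card_of_nodup hC.isTrail.edges_nodup, length_edges]

end Walk

theorem ncard_incidenceSet_eq_ncard_neighborSet (v : V) :
    (G.incidenceSet v).ncard = (G.neighborSet v).ncard := by
  classical
  rw [← Nat.card_coe_set_eq, ← Nat.card_coe_set_eq]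
  exact Nat.card_congr (G.incidenceSetEquivNeighborSet v)

theorem eq_or_eq_of_mem_of_ncard_neighborSet_eq_two {v : V} (hv : (G.neighborSet v).ncard = 2)
    {e f g : G.edgeSet} (he : v ∈ e.1) (hf : v ∈ f.1) (hg : v ∈ g.1) (hef : e ≠ f) :
    g = e ∨ g = f := by
  rw [← ncard_incidenceSet_eq_ncard_neighborSet] at hv
  exact (Set.eq_or_eq_of_ncard_eq_two hv (G.edge_mem_incidenceSet_iff.2 he)
    (G.edge_mem_incidenceSet_iff.2 hf) (Subtype.coe_injective.ne hef)
    (G.edge_mem_incidenceSet_iff.2 hg)).imp Subtype.ext Subtype.ext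

theorem Subgraph.notMem_of_adj_of_adj {D : Set V} (hD : ∀ v ∈ D, (G.neighborSet v).ncard = 2)
    (hcover : ∀ e ∈ G.edgeSet, ∃ v ∈ D, v ∈ e) (hpair : ∀ v ∈ D, ∃ x ∈ D, G.Adj v x)
    {S : G.lineGraph.Subgraph} (hS : ∀ X, (S.neighborSet X).ncard = 2) {E F F' : G.edgeSet}
    (hEF : S.Adj E F) (hFF' : S.Adj F F') (hEF' : E ≠ F') {u : V} (huE : u ∈ E.1)
    (huF : u ∈ F.1) : u ∉ F'.1 := by
  intro huF'
  have huD : u ∉ D := fun hu =>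
    (eq_or_eq_of_mem_of_ncard_neighborSet_eq_two (hD u hu) huE huF huF' (S.adj_sub hEF).ne).elim
      (fun h => hEF' h.symm) (fun h => (S.adj_sub hFF').ne h.symm)
  obtain ⟨b, hbD, hbF⟩ := hcover F.1 F.2
  obtain ⟨x, hxD, hbx⟩ := hpair b hbD
  let F'' : G.edgeSet := ⟨s(b, x), hbx⟩
  have huF'' : u ∉ F''.1 := by
    simp only [F'', Sym2.mem_iff, not_or]
    exact ⟨fun h => huD (h ▸ hbD), fun h => huD (h ▸ hxD)⟩
  have hF''F : S.Adj F'' F := by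
    by_contra hnot
    -- `b` lies only on `F` and `bx`, so every other neighbour of `bx` in `L(G)` meets it at `x`.
    have hx : ∀ Y, S.Adj F'' Y → x ∈ Y.1 := by
      intro Y hY
      obtain ⟨hne, z, hzF'', hzY⟩ := lineGraph_adj_iff_exists.1 (S.adj_sub hY)
      obtain rfl | rfl := Sym2.mem_iff.1 hzF''
      · obtain rfl | rfl := eq_or_eq_of_mem_of_ncard_neighborSet_eq_two (hD z hbD) hzF'' hbF hzY
          (fun h => huF'' (h ▸ huF))
        · exact absurd rfl hne
        · exact absurd hY hnot
      · exact hzY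
    obtain ⟨Y₁, Y₂, hY, hYs⟩ := Set.ncard_eq_two.1 (hS F'')
    have hY₁ : S.Adj F'' Y₁ := show Y₁ ∈ S.neighborSet F'' by simp [hYs]
    have hY₂ : S.Adj F'' Y₂ := show Y₂ ∈ S.neighborSet F'' by simp [hYs]
    obtain h | h := eq_or_eq_of_mem_of_ncard_neighborSet_eq_two (hD x hxD) (hx Y₁ hY₁)
      (hx Y₂ hY₂) (g := F'') (Sym2.mem_mk_right b x) hY
    · exact (S.adj_sub hY₁).ne h
    · exact (S.adj_sub hY₂).ne h
  obtain rfl | rfl := Set.eq_or_eq_of_ncard_eq_two (hS F) hEF.symm hFF' hEF' hF''F.symm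
  · exact huF'' huE
  · exact huF'' huF'

namespace Walk

theorem IsHamiltonianCycle.forall₂_darts_notMem [DecidableEq G.edgeSet] {D : Set V}
    (hD : ∀ v ∈ D, (G.neighborSet v).ncard = 2)
    (hcover : ∀ e ∈ G.edgeSet, ∃ v ∈ D, v ∈ e) (hpair : ∀ v ∈ D, ∃ x ∈ D, G.Adj v x)
    {e : G.edgeSet} {H : G.lineGraph.Walk e e} (hH : H.IsHamiltonianCycle) :
    List.Forall₂ (fun δ δ' : G.lineGraph.Dart => ∀ v ∈ δ.fst.1, v ∈ δ.snd.1 → v ∉ δ'.snd.1)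
      H.darts (H.darts.rotate 1) := by
  have hS : ∀ X, (H.toSubgraph.neighborSet X).ncard = 2 := fun X =>
    hH.isCycle.ncard_neighborSet_toSubgraph_eq_two (hH.mem_support X)
  have hdart : ∀ δ ∈ H.darts, H.toSubgraph.Adj δ.fst δ.snd := fun δ hδ =>
    adj_toSubgraph_iff_mem_edges.2 (List.mem_map_of_mem hδ)
  rw [List.forall₂_iff_zip]
  refine ⟨(List.length_rotate _ _).symm, fun {δ δ'} hδδ' v hv₁ hv₂ => ?_⟩
  obtain ⟨hadj, hne⟩ := List.forall₂_zip hH.isCycle.forall₂_darts_rotate_one hδδ'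
  have hδ' := hdart δ' (List.mem_rotate.1 (List.of_mem_zip hδδ').2)
  exact Subgraph.notMem_of_adj_of_adj hD hcover hpair hS (hdart δ (List.of_mem_zip hδδ').1)
    ((hadj : δ.snd = δ'.fst) ▸ hδ') hne hv₁ hv₂

theorem exists_edges_eq_map_support_tail_of_lineGraph {e : G.edgeSet}
    (H : G.lineGraph.Walk e e) (hH : ¬H.Nil)
    (hturn : List.Forall₂
      (fun δ δ' : G.lineGraph.Dart => ∀ v ∈ δ.fst.1, v ∈ δ.snd.1 → v ∉ δ'.snd.1)
      H.darts (H.darts.rotate 1)) :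
    ∃ (u : V) (C : G.Walk u u), C.edges = H.support.tail.map Subtype.val := by
  choose c hc using fun δ : G.lineGraph.Dart => (lineGraph_adj_iff_exists.1 δ.adj).2
  have hstep : List.Forall₂ (fun δ δ' => G.Adj (c δ) (c δ') ∧ s(c δ, c δ') = δ.snd.1)
      H.darts (H.darts.rotate 1) := by
    refine List.Forall₂.mp (fun δ δ' hadj hδ => ?_) H.forall₂_dartAdj_rotate_one hturn
    have hne : c δ ≠ c δ' := fun h => hδ _ (hc δ).1 (hc δ).2 (h ▸ (hc δ').2)
    have hedge : s(c δ, c δ') = δ.snd.1 :=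
      ((Sym2.mem_and_mem_iff hne).1 ⟨(hc δ).2, (hadj : δ.snd = δ'.fst) ▸ (hc δ').1⟩).symm
    exact ⟨G.mem_edgeSet.1 (hedge ▸ δ.snd.2), hedge⟩
  obtain ⟨u, C, -, hC⟩ := exists_support_eq_append_take_one (l := H.darts.map c)
    (by simpa [darts_eq_nil] using hH)
    (by
      rw [← List.map_rotate, List.forall₂_map_left_iff, List.forall₂_map_right_iff]
      exact hstep.imp fun _ _ => And.left)
  refine ⟨u, C, ?_⟩
  rw [hC, ← List.map_rotate, List.zipWith_map, ← map_snd_darts, List.map_map]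
  exact List.zipWith_eq_map_of_forall₂ (hstep.imp fun _ _ => And.right)

theorem isEulerian_of_edges_eq_map_support_tail [DecidableEq V] [DecidableEq G.edgeSet]
    {e : G.edgeSet} {H : G.lineGraph.Walk e e} (hH : H.IsHamiltonianCycle) {C : G.Walk u u}
    (hC : C.edges = H.support.tail.map Subtype.val) : C.IsEulerian := by
  rw [isEulerian_iff, isTrail_def, hC]
  refine ⟨hH.isCycle.support_nodup.map Subtype.val_injective,
    fun f hf => List.mem_map.2 ⟨⟨f, hf⟩, ?_, rfl⟩⟩
  exact support_tail_of_not_nil H hH.isCycle.not_nil ▸ hH.isHamiltonian_tail.mem_support _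

theorem IsEulerian.exists_isHamiltonianCycle_lineGraph [DecidableEq V] [DecidableEq G.edgeSet]
    {C : G.Walk u u} (hC : C.IsEulerian) (h3 : 3 ≤ C.length) :
    ∃ (e₀ : G.edgeSet) (H : G.lineGraph.Walk e₀ e₀),
      H.IsHamiltonianCycle ∧ H.support.dropLast.map Subtype.val = C.edges := by
  set Es : List G.edgeSet := C.darts.map fun d => ⟨d.edge, d.edge_mem⟩ with hEs_def
  have hEs : Es.map Subtype.val = C.edges := by simp [Es, edges]
  have hnd : Es.Nodup := List.Nodup.of_map Subtype.val (hEs ▸ hC.isTrail.edges_nodup)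
  have hlen : 3 ≤ Es.length := by simpa [Es] using h3
  have hall : ∀ X, X ∈ Es := fun X => by
    obtain ⟨Y, hY, hYX⟩ :=
      List.mem_map.1 (hEs ▸ hC.mem_edges_iff.2 X.2 : X.1 ∈ Es.map Subtype.val)
    exact Subtype.ext hYX ▸ hY
  have hshare : List.Forall₂ (fun E F : G.edgeSet => ∃ v, v ∈ E.1 ∧ v ∈ F.1) Es (Es.rotate 1) := by
    rw [hEs_def, ← List.map_rotate, List.forall₂_map_left_iff, List.forall₂_map_right_iff]
    exact C.forall₂_dartAdj_rotate_one.imp fun d d' h =>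
      ⟨d.snd, Sym2.mem_mk_right _ _, h ▸ Sym2.mem_mk_left _ _⟩
  have hadj : List.Forall₂ G.lineGraph.Adj Es (Es.rotate 1) :=
    List.Forall₂.mp (fun _ _ hne h => lineGraph_adj_iff_exists.2 ⟨hne, h⟩)
      (hnd.forall₂_ne_rotate_one (by omega)) hshare
  obtain ⟨e₀, H, hH, -⟩ := exists_support_eq_append_take_one (by rintro h; simp [h] at hlen) hadj
  refine ⟨e₀, H, isHamiltonianCycle_of_support_eq hH hnd hlen hall, ?_⟩
  rw [hH, List.dropLast_append_take_one, hEs]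

theorem sum_map_zip_rotate_one_eq_sum_map_edges {β : Type*} [AddCommMonoid β]
    (w : Sym2 V → Sym2 V → β) (hw : ∀ e f, w e f = w f e) {e : G.edgeSet}
    (H : G.lineGraph.Walk e e) {l : List (Sym2 V)} (hl : l ~r H.support.dropLast.map Subtype.val) :
    ((l.zip (l.rotate 1)).map fun p => w p.1 p.2).sum =
      (H.edges.map fun p => Sym2.lift ⟨w, hw⟩ (p.map Subtype.val)).sum := by
  rw [sum_map_edges_eq_sum_zipWith, List.map_zip_eq_zipWith, hl.sum_zipWith_rotate_one,
    ← List.map_rotate, List.zipWith_map]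
  simp [Function.curry]

end Walk

end SimpleGraph

open SimpleGraph Walk

open Classical in
theorem eulerian_cost_iff_hamiltonian_weight_general {V : Type*} [Fintype V] (G : SimpleGraph V)
    (hE : 3 ≤ Nat.card G.edgeSet) (D : Set V)
    (h1 : ∀ v ∈ D, G.degree v = 2)
    (h2 : ∀ e ∈ G.edgeSet, ∃ v ∈ D, v ∈ e)
    (h3 : ∀ v ∈ D, ∃! x, x ∈ D ∧ G.Adj v x)
    (w : Sym2 V → Sym2 V → ℚ) (hw : ∀ e f, w e f = w f e) (q : ℚ) :
    (∃ (u : V) (C : G.Walk u u), C.IsEulerian ∧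
        ((C.edges.zip (C.edges.rotate 1)).map fun p => w p.1 p.2).sum ≤ q) ↔
      (∃ (e₀ : G.edgeSet) (H : (SimpleGraph.lineGraph G).Walk e₀ e₀),
        H.IsHamiltonianCycle ∧
        (H.edges.map fun p => Sym2.lift ⟨w, hw⟩ (p.map Subtype.val)).sum ≤ q) := by
  have hD : ∀ v ∈ D, (G.neighborSet v).ncard = 2 := fun v hv => by
    rw [← Nat.card_coe_set_eq, Nat.card_eq_fintype_card, card_neighborSet_eq_degree, h1 v hv]
  constructor
  · rintro ⟨u, C, hC, hcost⟩
    obtain ⟨e₀, H, hH, hHC⟩ :=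
      hC.exists_isHamiltonianCycle_lineGraph (hC.card_edgeSet_eq_length ▸ hE)
    exact ⟨e₀, H, hH, sum_map_zip_rotate_one_eq_sum_map_edges w hw H (by rw [hHC]) ▸ hcost⟩
  · rintro ⟨e₀, H, hH, hweight⟩
    obtain ⟨u, C, hC⟩ := exists_edges_eq_map_support_tail_of_lineGraph H hH.isCycle.not_nil
      (hH.forall₂_darts_notMem hD h2 fun v hv => (h3 v hv).exists)
    refine ⟨u, C, isEulerian_of_edges_eq_map_support_tail hH hC, ?_⟩
    rwa [sum_map_zip_rotate_one_eq_sum_map_edges w hw H (by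
      rw [hC, support_tail_eq_dropLast_rotate_one, List.map_rotate]
      exact List.IsRotated.forall _ _)]

open Classical in
/-- Let `G` be a finite connected simple graph with at least `3` edges which is a
double subdivision of a multigraph (witnessed by the vertex set `D`), and let `w` be
turning costs on unordered pairs of distinct adjacent edges of `G`. Weight the line
graph of `G` by giving the edge joining adjacent edges `e` and `f` of `G` the weight
`w {e,f}`. Then for every rational `q`, `G` has an Eulerian circuit of turning cost
at most `q` iff the line graph has a Hamiltonian cycle of total weight at most `q`. -/
theorem eulerian_cost_iff_hamiltonian_weight {V : Type*} [Fintype V] (G : SimpleGraph V)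
    (hconn : G.Connected) (hE : 3 ≤ Nat.card G.edgeSet) (D : Set V)
    (h1 : ∀ v ∈ D, G.degree v = 2)
    (h2 : ∀ e ∈ G.edgeSet, ∃ v ∈ D, v ∈ e)
    (h3 : ∀ v ∈ D, ∃! x, x ∈ D ∧ G.Adj v x)
    (w : Sym2 V → Sym2 V → ℚ) (hw : ∀ e f, w e f = w f e) (q : ℚ) :
    (∃ (u : V) (C : G.Walk u u), C.IsEulerian ∧
        ((C.edges.zip (C.edges.rotate 1)).map fun p => w p.1 p.2).sum ≤ q) ↔
      (∃ (e₀ : G.edgeSet) (H : (SimpleGraph.lineGraph G).Walk e₀ e₀),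
        H.IsHamiltonianCycle ∧
        (H.edges.map fun p => Sym2.lift ⟨w, hw⟩ (p.map Subtype.val)).sum ≤ q) :=
  eulerian_cost_iff_hamiltonian_weight_general G hE D h1 h2 h3 w hw q
end

section
/- Let d be a positive integer, let H be the box (Cartesian) product of the cycle graph on Fin (2d) with the path graph on Fin d, a simple graph on vertex set Fin (2d) × Fin d, and let σ be a fixed-point-free involution of Fin (2d). Then there exists a family of paths P_i in H indexed by i ∈ Fin (2d) such that: P_i is a path from (i, 0) to (σ i, 0); P_{σ i} is the reverse of P_i; and for all i, j with j ∉ {i, σ i}, the paths P_i and P_j have no edge in common. -/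
/-!
Give each pair `{i, σ i}` its own level `ℓ i` of the path factor. The path for the pair climbs
column `i` to level `ℓ i`, runs along that level of the cycle to column `σ i`, and descends. Every
edge of it is vertical in column `i` or `σ i`, or horizontal at level `ℓ i`; an edge of the box
product is never both, so paths of different pairs, whose columns and levels are all distinct,
share no edge.
-/

open Function

namespace Function.Involutive

variable {ι : Type*} [Fintype ι] [LinearOrder ι] {σ : ι → ι}

theorem card_subtype_lt_apply (hσ : Involutive σ) (hfp : ∀ i, σ i ≠ i) {d : ℕ}
    (hcard : Fintype.card ι = 2 * d) : Fintype.card {i // i < σ i} = d := by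
  classical
  have hswap : (Finset.univ.filter fun i => i < σ i).card =
      (Finset.univ.filter fun i => ¬ i < σ i).card := by
    refine Finset.card_nbij' σ σ ?_ ?_ (fun i _ => hσ i) (fun i _ => hσ i)
    all_goals
      intro i hi
      simp only [Finset.coe_filter, Finset.mem_univ, true_and, Set.mem_ofPred_eq, not_lt] at hi ⊢
      rw [hσ i]
    · exact hi.le
    · exact lt_of_le_of_ne hi (hfp i)
  have hsum := Finset.card_filter_add_card_filter_not (s := Finset.univ) fun i => i < σ i
  rw [Finset.card_univ] at hsum
  rw [Fintype.card_subtype]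
  omega

theorem exists_pair_label (hσ : Involutive σ) (hfp : ∀ i, σ i ≠ i) {d : ℕ}
    (hcard : Fintype.card ι = 2 * d) :
    ∃ ℓ : ι → Fin d, (∀ i, ℓ (σ i) = ℓ i) ∧ ∀ i j, ℓ i = ℓ j → j = i ∨ j = σ i := by
  have hmin_lt (i : ι) : min i (σ i) < σ (min i (σ i)) := by
    rcases min_choice i (σ i) with h | h <;> rw [h]
    · exact lt_of_le_of_ne (min_eq_left_iff.mp h) (hfp i).symm
    · rw [hσ i]; exact lt_of_le_of_ne (min_eq_right_iff.mp h) (hfp i)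
  -- a pair is labelled by the rank of its smaller element among the `d` smaller elements
  let e := Fintype.equivFinOfCardEq (hσ.card_subtype_lt_apply hfp hcard)
  refine ⟨fun i => e ⟨min i (σ i), hmin_lt i⟩, fun i => ?_, fun i j hij => ?_⟩
  · simp only [hσ i, min_comm]
  · have hmin : min i (σ i) = min j (σ j) := congrArg Subtype.val (e.injective hij)
    rcases min_choice i (σ i) with hi | hi <;> rcases min_choice j (σ j) with hj | hj <;>
      rw [hi, hj] at hmin
    · exact Or.inl hmin.symm
    · exact Or.inr (by rw [hmin, hσ])
    · exact Or.inr hmin.symm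
    · exact Or.inl (hσ.injective hmin).symm

end Function.Involutive

namespace SimpleGraph

theorem Walk.copy_family_eq {ι V : Type*} {G : SimpleGraph V} {f g : ι → V}
    (W : ∀ i, G.Walk (f i) (g i)) {i j : ι} (h : i = j) :
    (W i).copy (congrArg f h) (congrArg g h) = W j := by
  subst h; rfl

section Symmetrize

variable {ι V : Type*} [LinearOrder ι] {G : SimpleGraph V} {σ : ι → ι} {f : ι → V}

def symmetrizeWalks (hσ : Involutive σ) (W : ∀ i, G.Walk (f i) (f (σ i))) (i : ι) :
    G.Walk (f i) (f (σ i)) :=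
  if i < σ i then W i else (W (σ i)).reverse.copy (congrArg f (hσ i)) rfl

theorem symmetrizeWalks_apply_of_lt (hσ : Involutive σ) (W : ∀ i, G.Walk (f i) (f (σ i)))
    {i : ι} (h : i < σ i) : symmetrizeWalks hσ W i = W i :=
  if_pos h

theorem symmetrizeWalks_apply_of_not_lt (hσ : Involutive σ) (W : ∀ i, G.Walk (f i) (f (σ i)))
    {i : ι} (h : ¬ i < σ i) :
    symmetrizeWalks hσ W i = (W (σ i)).reverse.copy (congrArg f (hσ i)) rfl :=
  if_neg h

theorem symmetrizeWalks_apply_apply (hσ : Involutive σ) (hfp : ∀ i, σ i ≠ i)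
    (W : ∀ i, G.Walk (f i) (f (σ i))) (i : ι) :
    symmetrizeWalks hσ W (σ i) = (symmetrizeWalks hσ W i).reverse.copy rfl (by rw [hσ i]) := by
  rcases lt_or_gt_of_ne (hfp i).symm with h | h
  · have h' : ¬ σ i < σ (σ i) := by rw [hσ i]; exact h.not_gt
    rw [symmetrizeWalks_apply_of_not_lt hσ W h', symmetrizeWalks_apply_of_lt hσ W h,
      ← Walk.copy_family_eq W (hσ i).symm, Walk.reverse_copy, Walk.copy_copy]
  · have h' : σ i < σ (σ i) := by rw [hσ i]; exact h
    rw [symmetrizeWalks_apply_of_lt hσ W h', symmetrizeWalks_apply_of_not_lt hσ W h.not_gt,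
      Walk.reverse_copy, Walk.reverse_reverse, Walk.copy_copy, Walk.copy_rfl_rfl]

theorem symmetrizeWalks_isPath (hσ : Involutive σ) {W : ∀ i, G.Walk (f i) (f (σ i))}
    (hW : ∀ i, (W i).IsPath) (i : ι) : (symmetrizeWalks hσ W i).IsPath := by
  unfold symmetrizeWalks
  split_ifs
  · exact hW i
  · rw [Walk.isPath_copy, Walk.isPath_reverse_iff]; exact hW (σ i)

theorem mem_edges_of_mem_edges_symmetrizeWalks (hσ : Involutive σ)
    (W : ∀ i, G.Walk (f i) (f (σ i))) {i : ι} {e : Sym2 V}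
    (he : e ∈ (symmetrizeWalks hσ W i).edges) : e ∈ (W i).edges ∨ e ∈ (W (σ i)).edges := by
  unfold symmetrizeWalks at he
  split_ifs at he
  · exact Or.inl he
  · rw [Walk.edges_copy, Walk.edges_reverse, List.mem_reverse] at he
    exact Or.inr he

end Symmetrize

section BoxProd

variable {α β : Type*} {G : SimpleGraph α} {H : SimpleGraph β}

def InColumnsOrRow (s : Set α) (c : β) (e : Sym2 (α × β)) : Prop :=
  (∃ a ∈ s, ∀ x ∈ e, x.1 = a) ∨ ∀ x ∈ e, x.2 = c

theorem Walk.mem_edges_boxProdRight {a : α} {b₁ b₂ : β} (p : H.Walk b₁ b₂) {e : Sym2 (α × β)}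
    (he : e ∈ (p.boxProdRight G a).edges) : ∀ x ∈ e, x.1 = a := by
  have hmap : (p.boxProdRight G a).edges = p.edges.map (Sym2.map (Prod.mk a)) :=
    Walk.edges_map _ p
  rw [hmap, List.mem_map] at he
  obtain ⟨e', -, rfl⟩ := he
  induction e' using Sym2.ind
  simp

theorem Walk.mem_edges_boxProdLeft {a₁ a₂ : α} {b : β} (p : G.Walk a₁ a₂) {e : Sym2 (α × β)}
    (he : e ∈ (p.boxProdLeft H b).edges) : ∀ x ∈ e, x.2 = b := by
  have hmap : (p.boxProdLeft H b).edges = p.edges.map (Sym2.map (·, b)) := Walk.edges_map _ p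
  rw [hmap, List.mem_map] at he
  obtain ⟨e', -, rfl⟩ := he
  induction e' using Sym2.ind
  simp

def Walk.boxProdDetour {a a' : α} {b c : β} (p : H.Walk b c) (q : G.Walk a a') :
    (G □ H).Walk (a, b) (a', b) :=
  (p.boxProdRight G a).append ((q.boxProdLeft H c).append (p.reverse.boxProdRight G a'))

theorem Walk.inColumnsOrRow_of_mem_edges_boxProdDetour {a a' : α} {b c : β} (p : H.Walk b c)
    (q : G.Walk a a') {e : Sym2 (α × β)} (he : e ∈ (p.boxProdDetour q).edges) :
    InColumnsOrRow {a, a'} c e := by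
  simp only [Walk.boxProdDetour, Walk.edges_append, List.mem_append] at he
  rcases he with he | he | he
  · exact Or.inl ⟨a, by simp, Walk.mem_edges_boxProdRight p he⟩
  · exact Or.inr (Walk.mem_edges_boxProdLeft q he)
  · exact Or.inl ⟨a', by simp, Walk.mem_edges_boxProdRight p.reverse he⟩

/-- An edge of `G □ H` is never both vertical and horizontal, since its ends differ. -/
theorem not_inColumnsOrRow_of_disjoint {e : Sym2 (α × β)} (he : e ∈ (G □ H).edgeSet)
    {s t : Set α} {c c' : β} (hst : Disjoint s t) (hc : c ≠ c') (hs : InColumnsOrRow s c e) :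
    ¬ InColumnsOrRow t c' e := by
  induction e using Sym2.ind with | _ u v => ?_
  have hne : u ≠ v := (G □ H).ne_of_adj he
  rintro (⟨a', ha', ht⟩ | ht) <;> rcases hs with ⟨a, ha, hs⟩ | hs
  · exact hst.ne_of_mem ha ha' ((hs u (by simp)).symm.trans (ht u (by simp)))
  · exact hne (Prod.ext ((ht u (by simp)).trans (ht v (by simp)).symm)
      ((hs u (by simp)).trans (hs v (by simp)).symm))
  · exact hne (Prod.ext ((hs u (by simp)).trans (hs v (by simp)).symm)
      ((ht u (by simp)).trans (ht v (by simp)).symm))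
  · exact hc ((hs u (by simp)).symm.trans (ht u (by simp)))

end BoxProd

end SimpleGraph

open SimpleGraph

/-- In the box product of the cycle graph on `Fin (2*d)` with the path graph on
`Fin d` (`d` positive), for every fixed-point-free involution `σ` of `Fin (2*d)`
there is a family of paths `P i` from `(i, 0)` to `(σ i, 0)` such that `P (σ i)` is
the reverse of `P i` and paths indexed by `i` and `j` with `j ∉ {i, σ i}` share no
edge. -/
theorem boxProd_edge_disjoint_paths (d : ℕ) (hd : 0 < d)
    (σ : Fin (2 * d) → Fin (2 * d)) (hinv : Function.Involutive σ)
    (hfp : ∀ i, σ i ≠ i) :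
    ∃ P : (i : Fin (2 * d)) →
        ((SimpleGraph.cycleGraph (2 * d)).boxProd (SimpleGraph.pathGraph d)).Walk
          (i, ⟨0, hd⟩) (σ i, ⟨0, hd⟩),
      (∀ i, (P i).IsPath) ∧
      (∀ i, P (σ i) = ((P i).reverse.copy rfl (by rw [hinv i]))) ∧
      (∀ i j, j ≠ i → j ≠ σ i → ∀ e ∈ (P i).edges, e ∉ (P j).edges) := by
  obtain ⟨ℓ, hℓσ, hℓ⟩ := hinv.exists_pair_label hfp (Fintype.card_fin _)
  let W i := (Walk.boxProdDetour (pathGraph_preconnected d ⟨0, hd⟩ (ℓ i)).some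
    (cycleGraph_preconnected i (σ i)).some).bypass
  have hW i : ∀ e ∈ (W i).edges, InColumnsOrRow {i, σ i} (ℓ i) e := fun e he =>
    Walk.inColumnsOrRow_of_mem_edges_boxProdDetour _ _ (Walk.edges_bypass_subset_edges _ he)
  have hP i : ∀ e ∈ (symmetrizeWalks hinv W i).edges, InColumnsOrRow {i, σ i} (ℓ i) e := by
    intro e he
    rcases mem_edges_of_mem_edges_symmetrizeWalks hinv W he with he | he
    · exact hW i e he
    · simpa [hinv i, hℓσ, Set.pair_comm] using hW (σ i) e he
  refine ⟨symmetrizeWalks hinv W, symmetrizeWalks_isPath hinv fun i => Walk.bypass_isPath _,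
    symmetrizeWalks_apply_apply hinv hfp W, fun i j hji hjσ e hei hej => ?_⟩
  have hcols : Disjoint ({i, σ i} : Set (Fin (2 * d))) {j, σ j} := by
    simp only [Set.disjoint_insert_left, Set.disjoint_singleton_left, Set.mem_insert_iff,
      Set.mem_singleton_iff, not_or]
    refine ⟨⟨fun h => hji h.symm, fun h => hjσ (by rw [h, hinv])⟩,
      fun h => hjσ h.symm, fun h => hji (hinv.injective h).symm⟩
  have hlevel : ℓ i ≠ ℓ j := fun h => (hℓ i j h).elim hji hjσ
  exact not_inColumnsOrRow_of_disjoint (Walk.edges_subset_edgeSet _ hei) hcols hlevel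
    (hP i e hei) (hP j e hej)
end

section
/- Let G be a finite simple graph and suppose that for every vertex v we are given a fixed-point-free involution μ_v of the set of edges of G incident with v (a transition system). Call a nonempty closed trail W in G μ-compatible if for every pair of consecutive edges of W meeting at a vertex v — including the pair formed by the last and first edges of W at its base vertex — the involution μ_v maps one edge of the pair to the other. If G has a μ-compatible Eulerian circuit, then every nonempty μ-compatible closed trail in G uses every edge of G. -/
/-!
A transition system makes the darts of `G` a deterministic system: the successor of the dart
`(x, y)` leaves `y` along the edge `μ y s(x, y)`. The darts of a compatible closed walk form a
single cyclic orbit of this map, so a set of darts closed under it that contains one dart of the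
Eulerian circuit contains them all. The darts of `W` form such a set, and the first of them runs
along the circuit in one of the two directions. If it runs backwards, use that `μ` is an
involution: the successor of the reversal of `d`'s successor is the reversal of `d`, so the
reversed circuit is an orbit as well.
-/

/-- A closed walk `W` (based at `u`) is compatible with a transition system `μ`
(which assigns to each vertex `v` an involution `μ v` of the edges at `v`) if for
every pair of consecutive edges of `W` meeting at a vertex `v` — including the pair
formed by the last and first edges of `W` at `u` — the involution `μ v` maps one
edge of the pair to the other. -/
def SimpleGraph.Walk.TransCompatible {V : Type*} {G : SimpleGraph V}
    (μ : V → Sym2 V → Sym2 V) {u : V} (W : G.Walk u u) : Prop :=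
  ∀ (i : ℕ) (h : i < W.edges.length),
    μ (W.support.get ⟨i + 1, by
        rw [SimpleGraph.Walk.length_support]
        rw [SimpleGraph.Walk.length_edges] at h
        omega⟩)
      (W.edges.get ⟨i, h⟩) =
      W.edges.get ⟨(i + 1) % W.edges.length, Nat.mod_lt _ (Nat.zero_lt_of_lt h)⟩

theorem List.cyclic_induction {α : Type*} {l : List α} {P : α → Prop}
    (hstep : ∀ i (hi : i < l.length),
      P l[i] → P (l[(i + 1) % l.length]'(Nat.mod_lt _ (Nat.zero_lt_of_lt hi))))
    {a b : α} (ha : a ∈ l) (hPa : P a) (hb : b ∈ l) : P b := by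
  obtain ⟨i, hi, rfl⟩ := List.getElem_of_mem ha
  obtain ⟨j, hj, rfl⟩ := List.getElem_of_mem hb
  have hpos : 0 < l.length := Nat.zero_lt_of_lt hi
  have hiter : ∀ k, P (l[(i + k) % l.length]'(Nat.mod_lt _ hpos)) := by
    intro k
    induction k with
    | zero => simpa [Nat.mod_eq_of_lt hi] using hPa
    | succ k ih =>
      have := hstep _ (Nat.mod_lt _ hpos) ih
      simpa only [Nat.mod_add_mod, Nat.add_assoc] using this
  have hidx : (i + (l.length - i + j)) % l.length = j := by
    rw [show i + (l.length - i + j) = l.length + j by omega, Nat.add_mod_left,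
      Nat.mod_eq_of_lt hj]
  simpa only [hidx] using hiter (l.length - i + j)

namespace SimpleGraph

variable {V : Type*} {G : SimpleGraph V}

theorem Dart.eq_of_fst_eq_of_edge_eq {d d' : G.Dart} (hfst : d.fst = d'.fst)
    (hedge : d.edge = d'.edge) : d = d' := by
  rcases (dart_edge_eq_iff d d').mp hedge with h | rfl
  · exact h
  · exact (d'.adj.ne hfst.symm).elim

theorem Walk.getVert_succ_mod_length {u : V} (p : G.Walk u u) {i : ℕ} (hi : i < p.length) :
    p.getVert ((i + 1) % p.length) = p.getVert (i + 1) := by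
  rcases Nat.lt_or_eq_of_le (show i + 1 ≤ p.length from hi) with hlt | heq
  · rw [Nat.mod_eq_of_lt hlt]
  · rw [heq, Nat.mod_self, getVert_zero, getVert_length]

variable (μ : V → Sym2 V → Sym2 V)
  (hmem : ∀ v, ∀ e ∈ G.incidenceSet v, μ v e ∈ G.incidenceSet v)

noncomputable def Dart.transition (d : G.Dart) : G.Dart :=
  have h : μ d.snd d.edge ∈ G.incidenceSet d.snd :=
    hmem _ _ ⟨d.edge_mem, Sym2.mem_mk_right _ _⟩
  ⟨(d.snd, Sym2.Mem.other h.2), by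
    rw [← mem_edgeSet, Sym2.other_spec h.2]
    exact h.1⟩

namespace Dart

@[simp]
theorem transition_fst (d : G.Dart) : (d.transition μ hmem).fst = d.snd := rfl

@[simp]
theorem transition_edge (d : G.Dart) : (d.transition μ hmem).edge = μ d.snd d.edge :=
  Sym2.other_spec _

theorem transition_symm_transition (hinv : ∀ v, ∀ e ∈ G.incidenceSet v, μ v (μ v e) = e)
    (d : G.Dart) : ((d.transition μ hmem).symm.transition μ hmem) = d.symm := by
  refine eq_of_fst_eq_of_edge_eq rfl ?_
  simp only [transition_edge, edge_symm, symm_toProd, Prod.snd_swap, transition_fst]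
  exact hinv _ _ ⟨d.edge_mem, Sym2.mem_mk_right _ _⟩

end Dart

namespace Walk.TransCompatible

variable {μ} {u : V} {C : G.Walk u u}

theorem transition_getElem_darts (hC : C.TransCompatible μ) {i : ℕ} (hi : i < C.darts.length) :
    C.darts[i].transition μ hmem =
      C.darts[(i + 1) % C.darts.length]'(Nat.mod_lt _ (Nat.zero_lt_of_lt hi)) := by
  have hlen : i < C.length := C.length_darts ▸ hi
  have hcompat := hC i (by simpa using hlen)
  simp only [List.get_eq_getElem, length_edges, support_getElem_eq_getVert] at hcompat
  refine Dart.eq_of_fst_eq_of_edge_eq ?_ ?_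
  · simp only [Dart.transition_fst, darts_getElem_eq_getVert, length_darts]
    exact (C.getVert_succ_mod_length hlen).symm
  · simp only [Dart.transition_edge, edge_getElem_darts, length_darts]
    rw [← hcompat, darts_getElem_eq_getVert]

theorem transition_mem_darts (hC : C.TransCompatible μ) {d : G.Dart} (hd : d ∈ C.darts) :
    d.transition μ hmem ∈ C.darts := by
  obtain ⟨i, hi, rfl⟩ := List.getElem_of_mem hd
  rw [hC.transition_getElem_darts hmem hi]
  exact List.getElem_mem _

theorem mem_of_mem_darts {S : Set G.Dart} (hS : ∀ d ∈ S, d.transition μ hmem ∈ S)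
    (hC : C.TransCompatible μ) {c d : G.Dart} (hc : c ∈ C.darts) (hcS : c ∈ S)
    (hd : d ∈ C.darts) : d ∈ S :=
  List.cyclic_induction (fun _ hi h => hC.transition_getElem_darts hmem hi ▸ hS _ h) hc hcS hd

theorem symm_mem_of_symm_mem_darts {S : Set G.Dart} (hS : ∀ d ∈ S, d.transition μ hmem ∈ S)
    (hinv : ∀ v, ∀ e ∈ G.incidenceSet v, μ v (μ v e) = e)
    (hC : C.TransCompatible μ) {c d : G.Dart} (hc : c ∈ C.darts) (hcS : c.symm ∈ S)
    (hd : d ∈ C.darts) : d.symm ∈ S := by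
  by_contra hdS
  refine List.cyclic_induction (P := fun x => x.symm ∉ S) (fun i hi h hnext => h ?_)
    hd hdS hc hcS
  rw [← Dart.transition_symm_transition μ hmem hinv, hC.transition_getElem_darts hmem hi]
  exact hS _ hnext

end Walk.TransCompatible

end SimpleGraph

open SimpleGraph

open Classical in
theorem compatible_closed_trail_of_compatible_eulerian_general {V : Type*}
    (G : SimpleGraph V) (μ : V → Sym2 V → Sym2 V)
    (hmem : ∀ v, ∀ e ∈ G.incidenceSet v, μ v e ∈ G.incidenceSet v)
    (hinv : ∀ v, ∀ e ∈ G.incidenceSet v, μ v (μ v e) = e)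
    (hE : ∃ (u : V) (C : G.Walk u u), C.IsEulerian ∧ C.TransCompatible μ) :
    ∀ (v : V) (W : G.Walk v v), W.IsTrail → W.edges ≠ [] → W.TransCompatible μ →
      ∀ e ∈ G.edgeSet, e ∈ W.edges := by
  intro v W _ hne hW e he
  obtain ⟨u, C, hCe, hC⟩ := hE
  have hS : ∀ d ∈ W.darts, d.transition μ hmem ∈ W.darts :=
    fun _ => hW.transition_mem_darts hmem
  obtain ⟨w, hw⟩ := List.exists_mem_of_ne_nil W.darts (by simpa [Walk.edges] using hne)
  obtain ⟨c, hc, hcw⟩ := List.mem_map.1 (hCe.mem_edges_iff.2 w.edge_mem)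
  obtain ⟨d, hd, rfl⟩ := List.mem_map.1 (hCe.mem_edges_iff.2 he)
  rcases (dart_edge_eq_iff c w).1 hcw with rfl | rfl
  · exact List.mem_map_of_mem (hC.mem_of_mem_darts hmem hS hc hw hd)
  · rw [← Dart.edge_symm]
    exact List.mem_map_of_mem (hC.symm_mem_of_symm_mem_darts hmem hS hinv hc hw hd)

open Classical in
/-- Given a transition system on a finite simple graph `G` (a fixed-point-free
involution `μ v` of the edges incident with `v` for each vertex `v`), if `G` admits
a `μ`-compatible Eulerian circuit, then every nonempty `μ`-compatible closed trail
in `G` uses every edge of `G`. -/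
theorem compatible_closed_trail_of_compatible_eulerian {V : Type*} [Fintype V]
    (G : SimpleGraph V) (μ : V → Sym2 V → Sym2 V)
    (hmem : ∀ v, ∀ e ∈ G.incidenceSet v, μ v e ∈ G.incidenceSet v)
    (hinv : ∀ v, ∀ e ∈ G.incidenceSet v, μ v (μ v e) = e)
    (hfp : ∀ v, ∀ e ∈ G.incidenceSet v, μ v e ≠ e)
    (hE : ∃ (u : V) (C : G.Walk u u), C.IsEulerian ∧ C.TransCompatible μ) :
    ∀ (v : V) (W : G.Walk v v), W.IsTrail → W.edges ≠ [] → W.TransCompatible μ →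
      ∀ e ∈ G.edgeSet, e ∈ W.edges :=
  compatible_closed_trail_of_compatible_eulerian_general G μ hmem hinv hE
end
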